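/- Let A, B, C, D, P, Q be complex matrices of suitable orders (with appropriate invertible Hermitian weights) such that P^[†] and Q^[†] exist. Then rank(D − C P^[†] A Q^[†] B) = rank of the 3×3 block matrix [[P^[*] A Q^[*], P^[*] P P^[*], 0],[Q^[*] Q Q^[*], 0, Q^[*] B],[0, C P^[*], −D]] minus rank(P) minus rank(Q). -/

import Mathlib

/-!
Write `S = P^[*] P P^[*]`. The weighted Penrose equations, together with
`(U V)^[*] = V^[*] U^[*]`, give `P^[*] P XP = P^[*] = XP P P^[*]`, `P^[*] XP^[*] = XP P` and
`XP^[*] P^[*] = P XP`, and likewise for `Q`. Hence the outer blocks of the 3×3 matrix factor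
through its upper-left 2×2 block `E`, and block elimination splits the matrix as
`E ⊕ -(D - C XP A XQ B)`. A further column operation turns `E` into the anti-diagonal matrix
with blocks `S_P`, `S_Q`, and `rank S_P = rank P` because `S_P XP^[*] XP = P^[*]`.
-/

open Matrix

/-- The weighted (MN-) adjoint `A^[*] = N⁻¹ Aᴴ M` of a matrix between
indefinite inner product spaces with weights `M` (output) and `N` (input). -/
noncomputable def wadj {m n : ℕ} (M : Matrix (Fin m) (Fin m) ℂ)
    (N : Matrix (Fin n) (Fin n) ℂ) (A : Matrix (Fin m) (Fin n) ℂ) :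
    Matrix (Fin n) (Fin m) ℂ := N⁻¹ * Aᴴ * M

/-- `X` is the weighted Moore-Penrose inverse of `A` w.r.t. weights `M`, `N`:
the four weighted Penrose equations. -/
def IsWMP {m n : ℕ} (M : Matrix (Fin m) (Fin m) ℂ)
    (N : Matrix (Fin n) (Fin n) ℂ) (A : Matrix (Fin m) (Fin n) ℂ)
    (X : Matrix (Fin n) (Fin m) ℂ) : Prop :=
  A * X * A = A ∧ X * A * X = X ∧
    wadj M M (A * X) = A * X ∧ wadj N N (X * A) = X * A


section BlockRank

open Module

variable {K : Type*} [Field K]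

theorem LinearMap.finrank_range_prodMap {V₁ V₂ W₁ W₂ : Type*} [AddCommGroup V₁] [AddCommGroup V₂]
    [AddCommGroup W₁] [AddCommGroup W₂] [Module K V₁] [Module K V₂] [Module K W₁] [Module K W₂]
    [FiniteDimensional K W₁] [FiniteDimensional K W₂] (f : V₁ →ₗ[K] W₁) (g : V₂ →ₗ[K] W₂) :
    finrank K (range (f.prodMap g)) = finrank K (range f) + finrank K (range g) := by
  have hinj : Function.Injective ((range f).subtype.prodMap (range g).subtype) :=
    Subtype.val_injective.prodMap Subtype.val_injective
  rw [range_prodMap, ← finrank_prod, ← LinearMap.finrank_range_of_inj hinj, range_prodMap,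
    Submodule.range_subtype, Submodule.range_subtype]

variable {l m n o : Type*} [Fintype l] [Fintype m] [Fintype n] [Fintype o]

theorem Matrix.rank_fromBlocks_zero₁₂_zero₂₁ (A : Matrix m l K) (D : Matrix o n K) :
    (fromBlocks A 0 0 D).rank = A.rank + D.rank := by
  have h : (fromBlocks A 0 0 D).mulVecLin =
      (LinearEquiv.sumArrowLequivProdArrow m o K K).symm.toLinearMap ∘ₗ
        A.mulVecLin.prodMap D.mulVecLin ∘ₗ
          (LinearEquiv.sumArrowLequivProdArrow l n K K).toLinearMap := by
    ext v i
    cases i <;> simp [fromBlocks_mulVec, LinearEquiv.sumArrowLequivProdArrow,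
      Equiv.sumArrowEquivProdArrow]
  rw [rank, h, LinearMap.range_comp, LinearMap.range_comp_of_range_eq_top _ (LinearEquiv.range _),
    LinearEquiv.finrank_map_eq, LinearMap.finrank_range_prodMap, rank, rank]

theorem Matrix.rank_neg {R : Type*} [CommRing R] {m n : Type*} [Fintype n] (A : Matrix m n R) :
    (-A).rank = A.rank := by
  have h : (-A).mulVecLin = -A.mulVecLin := LinearMap.ext fun v => neg_mulVec v A
  rw [rank, rank, h, LinearMap.range_neg]

variable [DecidableEq l] [DecidableEq m] [DecidableEq n] [DecidableEq o]

theorem Matrix.rank_fromBlocks_of_eq_mul_of_eq_mul {E : Matrix m l K} {F : Matrix m n K}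
    {G : Matrix o l K} (H : Matrix o n K) {Y : Matrix l n K} {Z : Matrix o m K}
    (hF : F = E * Y) (hG : G = Z * E) :
    (fromBlocks E F G H).rank = E.rank + (H - Z * F).rank := by
  have hL : IsUnit (fromBlocks 1 0 (-Z) 1 : Matrix (m ⊕ o) (m ⊕ o) K).det := by simp
  have hR : IsUnit (fromBlocks 1 (-Y) 0 1 : Matrix (l ⊕ n) (l ⊕ n) K).det := by simp
  have hsplit : (fromBlocks 1 0 (-Z) 1 : Matrix (m ⊕ o) (m ⊕ o) K) * fromBlocks E F G H *
      (fromBlocks 1 (-Y) 0 1 : Matrix (l ⊕ n) (l ⊕ n) K) =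
      fromBlocks E 0 0 (H - Z * F) := by
    subst hF hG
    simp only [fromBlocks_multiply]
    congr 1 <;> simp [sub_eq_neg_add]
  rw [← rank_mul_eq_left_of_isUnit_det _ _ hR, ← rank_mul_eq_right_of_isUnit_det _ _ hL,
    ← Matrix.mul_assoc, hsplit, rank_fromBlocks_zero₁₂_zero₂₁]

theorem Matrix.rank_fromBlocks_zero₂₂_of_eq_mul {E : Matrix m l K} {F : Matrix m n K}
    (G : Matrix o l K) {W : Matrix n l K} (hE : E = F * W) :
    (fromBlocks E F G 0).rank = F.rank + G.rank := by
  have hswap : (fromBlocks E F G 0).submatrix (Equiv.refl _) (Equiv.sumComm n l) =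
      fromBlocks F E 0 G := by
    simp
  rw [← rank_submatrix _ (Equiv.refl _) (Equiv.sumComm n l), hswap,
    rank_fromBlocks_of_eq_mul_of_eq_mul G hE (Z := 0) (by simp)]
  simp

end BlockRank

section WeightedAdjoint

variable {m n k : ℕ}

theorem wadj_mul (M : Matrix (Fin m) (Fin m) ℂ) {N : Matrix (Fin n) (Fin n) ℂ}
    (L : Matrix (Fin k) (Fin k) ℂ) (hN : IsUnit N) (A : Matrix (Fin m) (Fin n) ℂ)
    (B : Matrix (Fin n) (Fin k) ℂ) : wadj M L (A * B) = wadj N L B * wadj M N A := by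
  have hNN : N * N⁻¹ = 1 := mul_nonsing_inv N ((isUnit_iff_isUnit_det N).mp hN)
  simp only [wadj, conjTranspose_mul, Matrix.mul_assoc]
  rw [← Matrix.mul_assoc N, hNN, Matrix.one_mul]

open scoped ComplexOrder in
theorem rank_wadj {M : Matrix (Fin m) (Fin m) ℂ} {N : Matrix (Fin n) (Fin n) ℂ} (hM : IsUnit M)
    (hN : IsUnit N) (A : Matrix (Fin m) (Fin n) ℂ) : (wadj M N A).rank = A.rank := by
  have hNinv : IsUnit N⁻¹.det := isUnit_nonsing_inv_det N ((isUnit_iff_isUnit_det N).mp hN)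
  rw [wadj, rank_mul_eq_left_of_isUnit_det _ _ ((isUnit_iff_isUnit_det M).mp hM),
    rank_mul_eq_right_of_isUnit_det _ _ hNinv, rank_conjTranspose]

namespace IsWMP

variable {M : Matrix (Fin m) (Fin m) ℂ} {N : Matrix (Fin n) (Fin n) ℂ}
  {A : Matrix (Fin m) (Fin n) ℂ} {X : Matrix (Fin n) (Fin m) ℂ} {o : Type*}

theorem mul_inv_mul_assoc (h : IsWMP M N A X) (z : Matrix (Fin n) o ℂ) :
    A * (X * (A * z)) = A * z := by
  rw [← Matrix.mul_assoc, ← Matrix.mul_assoc, h.1]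

theorem inv_mul_inv_assoc (h : IsWMP M N A X) (z : Matrix (Fin m) o ℂ) :
    X * (A * (X * z)) = X * z := by
  rw [← Matrix.mul_assoc, ← Matrix.mul_assoc, h.2.1]

theorem wadj_mul_mul_inv (h : IsWMP M N A X) (hM : IsUnit M) :
    wadj M N A * (A * X) = wadj M N A := by
  conv_rhs => rw [← h.1, wadj_mul M N hM, h.2.2.1]

theorem inv_mul_mul_wadj (h : IsWMP M N A X) (hN : IsUnit N) :
    X * (A * wadj M N A) = wadj M N A := by
  conv_rhs => rw [← h.1, Matrix.mul_assoc, wadj_mul M N hN, h.2.2.2]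
  rw [Matrix.mul_assoc]

theorem wadj_mul_mul_inv_assoc (h : IsWMP M N A X) (hM : IsUnit M) (z : Matrix (Fin m) o ℂ) :
    wadj M N A * (A * (X * z)) = wadj M N A * z := by
  rw [← Matrix.mul_assoc A, ← Matrix.mul_assoc, h.wadj_mul_mul_inv hM]

theorem wadj_mul_wadj_inv_assoc (h : IsWMP M N A X) (hM : IsUnit M) (z : Matrix (Fin n) o ℂ) :
    wadj M N A * (wadj N M X * z) = X * (A * z) := by
  rw [← Matrix.mul_assoc, ← wadj_mul N N hM, h.2.2.2, Matrix.mul_assoc]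

theorem wadj_inv_mul_wadj_assoc (h : IsWMP M N A X) (hN : IsUnit N) (z : Matrix (Fin m) o ℂ) :
    wadj N M X * (wadj M N A * z) = A * (X * z) := by
  rw [← Matrix.mul_assoc, ← wadj_mul M M hN, h.2.2.1, Matrix.mul_assoc]

theorem rank_wadj_mul_mul_wadj (h : IsWMP M N A X) (hM : IsUnit M) (hN : IsUnit N) :
    (wadj M N A * A * wadj M N A).rank = A.rank := by
  have hcancel : wadj M N A * A * wadj M N A * (wadj N M X * X) = wadj M N A := by
    simp only [Matrix.mul_assoc, h.wadj_mul_wadj_inv_assoc hM, h.mul_inv_mul_assoc,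
      h.wadj_mul_mul_inv hM]
  refine le_antisymm ?_ ?_
  · exact (rank_mul_le_left _ _).trans <| (rank_mul_le_left _ _).trans (rank_wadj hM hN A).le
  · calc A.rank = (wadj M N A * A * wadj M N A * (wadj N M X * X)).rank := by
          rw [hcancel, rank_wadj hM hN]
      _ ≤ _ := rank_mul_le_left _ _

end IsWMP

end WeightedAdjoint

theorem stmt_15_general {p₁ p₂ q₁ q₂ d₁ d₂ : ℕ}
    (MP : Matrix (Fin p₁) (Fin p₁) ℂ) (NP : Matrix (Fin p₂) (Fin p₂) ℂ)
    (MQ : Matrix (Fin q₁) (Fin q₁) ℂ) (NQ : Matrix (Fin q₂) (Fin q₂) ℂ)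
    (hMPu : IsUnit MP) (hNPu : IsUnit NP)
    (hMQu : IsUnit MQ) (hNQu : IsUnit NQ)
    (P : Matrix (Fin p₁) (Fin p₂) ℂ) (Q : Matrix (Fin q₁) (Fin q₂) ℂ)
    (XP : Matrix (Fin p₂) (Fin p₁) ℂ) (XQ : Matrix (Fin q₂) (Fin q₁) ℂ)
    (hXP : IsWMP MP NP P XP) (hXQ : IsWMP MQ NQ Q XQ)
    (A : Matrix (Fin p₁) (Fin q₂) ℂ) (B : Matrix (Fin q₁) (Fin d₂) ℂ)
    (C : Matrix (Fin d₁) (Fin p₂) ℂ) (D : Matrix (Fin d₁) (Fin d₂) ℂ) :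
    (D - C * XP * A * XQ * B).rank + P.rank + Q.rank =
      (Matrix.fromBlocks
        (Matrix.fromBlocks (wadj MP NP P * A * wadj MQ NQ Q)
          (wadj MP NP P * P * wadj MP NP P)
          (wadj MQ NQ Q * Q * wadj MQ NQ Q) 0)
        (Matrix.fromRows (0 : Matrix (Fin p₂) (Fin d₂) ℂ) (wadj MQ NQ Q * B))
        (Matrix.fromCols (0 : Matrix (Fin d₁) (Fin q₁) ℂ) (C * wadj MP NP P))
        (-D)).rank := by
  have hE : (fromBlocks (wadj MP NP P * A * wadj MQ NQ Q) (wadj MP NP P * P * wadj MP NP P)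
      (wadj MQ NQ Q * Q * wadj MQ NQ Q) 0).rank = P.rank + Q.rank := by
    rw [rank_fromBlocks_zero₂₂_of_eq_mul _ (W := wadj NP MP XP * XP * A * wadj MQ NQ Q),
      hXP.rank_wadj_mul_mul_wadj hMPu hNPu, hXQ.rank_wadj_mul_mul_wadj hMQu hNQu]
    simp only [Matrix.mul_assoc, hXP.wadj_mul_wadj_inv_assoc hMPu, hXP.mul_inv_mul_assoc,
      hXP.wadj_mul_mul_inv_assoc hMPu]
  rw [rank_fromBlocks_of_eq_mul_of_eq_mul (-D)
      (Y := fromRows (wadj NQ MQ XQ * XQ * B) (-(wadj NP MP XP * XP * A * XQ * B)))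
      (Z := fromCols (C * XP * wadj NP MP XP) (-(C * XP * A * XQ * wadj NQ MQ XQ))), hE]
  case hF =>
    simp only [fromBlocks_mul_fromRows, Matrix.zero_mul, neg_zero, add_zero, Matrix.mul_neg,
      Matrix.mul_assoc, hXQ.wadj_mul_wadj_inv_assoc hMQu, hXQ.inv_mul_inv_assoc,
      hXP.wadj_mul_wadj_inv_assoc hMPu, hXP.mul_inv_mul_assoc, hXP.wadj_mul_mul_inv_assoc hMPu,
      hXQ.wadj_mul_mul_inv_assoc hMQu, add_neg_cancel]
  case hG =>
    simp only [fromCols_mul_fromBlocks, Matrix.mul_zero, add_zero, Matrix.neg_mul, Matrix.mul_assoc,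
      hXP.wadj_inv_mul_wadj_assoc hNPu, hXP.inv_mul_inv_assoc, hXP.inv_mul_mul_wadj hNPu,
      hXQ.wadj_inv_mul_wadj_assoc hNQu, hXQ.inv_mul_mul_wadj hNQu, add_neg_cancel]
  simp only [fromCols_mul_fromRows, Matrix.mul_zero, zero_add, Matrix.neg_mul, Matrix.mul_assoc,
    hXQ.wadj_inv_mul_wadj_assoc hNQu, hXQ.inv_mul_inv_assoc, sub_neg_eq_add]
  rw [neg_add_eq_sub, ← rank_neg (_ - D), neg_sub]
  ring

theorem stmt_15 {p₁ p₂ q₁ q₂ d₁ d₂ : ℕ}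
    (MP : Matrix (Fin p₁) (Fin p₁) ℂ) (NP : Matrix (Fin p₂) (Fin p₂) ℂ)
    (MQ : Matrix (Fin q₁) (Fin q₁) ℂ) (NQ : Matrix (Fin q₂) (Fin q₂) ℂ)
    (hMP : MP.IsHermitian) (hMPu : IsUnit MP) (hNP : NP.IsHermitian) (hNPu : IsUnit NP)
    (hMQ : MQ.IsHermitian) (hMQu : IsUnit MQ) (hNQ : NQ.IsHermitian) (hNQu : IsUnit NQ)
    (P : Matrix (Fin p₁) (Fin p₂) ℂ) (Q : Matrix (Fin q₁) (Fin q₂) ℂ)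
    (XP : Matrix (Fin p₂) (Fin p₁) ℂ) (XQ : Matrix (Fin q₂) (Fin q₁) ℂ)
    (hXP : IsWMP MP NP P XP) (hXQ : IsWMP MQ NQ Q XQ)
    (A : Matrix (Fin p₁) (Fin q₂) ℂ) (B : Matrix (Fin q₁) (Fin d₂) ℂ)
    (C : Matrix (Fin d₁) (Fin p₂) ℂ) (D : Matrix (Fin d₁) (Fin d₂) ℂ) :
    (D - C * XP * A * XQ * B).rank + P.rank + Q.rank =
      (Matrix.fromBlocks
        (Matrix.fromBlocks (wadj MP NP P * A * wadj MQ NQ Q)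
          (wadj MP NP P * P * wadj MP NP P)
          (wadj MQ NQ Q * Q * wadj MQ NQ Q) 0)
        (Matrix.fromRows (0 : Matrix (Fin p₂) (Fin d₂) ℂ) (wadj MQ NQ Q * B))
        (Matrix.fromCols (0 : Matrix (Fin d₁) (Fin q₁) ℂ) (C * wadj MP NP P))
        (-D)).rank :=
  stmt_15_general MP NP MQ NQ hMPu hNPu hMQu hNQu P Q XP XQ hXP hXQ A B C D
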